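/- Characterization of the pruned labels by ranks on shortest paths: for every index 1 ≤ j ≤ n and every vertex u with d_G(v_j, u) < ∞, the pair (v_j, d_G(v_j, u)) belongs to L'_n(u) if and only if there is no index i < j with v_i ∈ P_G(v_j, u); that is, v_j appears in the final label of u exactly when v_j has the smallest rank among all vertices lying on shortest paths between v_j and u. -/
import Mathlib


open SimpleGraph

/-- The 2-hop query value computed from a label assignment `L`:
the minimum of `d₁ + d₂` over common label vertices, `∞` if none. -/
noncomputable def Query {V : Type*} (L : V → Set (V × ℕ∞)) (s t : V) : ℕ∞ :=
  sInf {x : ℕ∞ | ∃ w d₁ d₂, (w, d₁) ∈ L s ∧ (w, d₂) ∈ L t ∧ x = d₁ + d₂}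

/- The naive landmark labels `L_k`. -/
open Classical in
noncomputable def naiveL {V : Type*} (G : SimpleGraph V) (ord : ℕ → V) :
    ℕ → V → Set (V × ℕ∞)
  | 0 => fun _ => ∅
  | (k + 1) => fun u =>
      if G.edist (ord (k + 1)) u < ⊤ then
        naiveL G ord k u ∪ {(ord (k + 1), G.edist (ord (k + 1)) u)}
      else naiveL G ord k u

/- The pruned landmark labels `L'_k`. -/
open Classical in
noncomputable def prunedL {V : Type*} (G : SimpleGraph V) (ord : ℕ → V) :
    ℕ → V → Set (V × ℕ∞)
  | 0 => fun _ => ∅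
  | (k + 1) => fun u =>
      if G.edist (ord (k + 1)) u < ⊤ ∧
          G.edist (ord (k + 1)) u < Query (prunedL G ord k) (ord (k + 1)) u then
        prunedL G ord k u ∪ {(ord (k + 1), G.edist (ord (k + 1)) u)}
      else prunedL G ord k u

/-- `P_G(s,t)`: the set of vertices on shortest paths between `s` and `t`. -/
def PG {V : Type*} (G : SimpleGraph V) (s t : V) : Set V :=
  {w | G.edist s w + G.edist w t = G.edist s t}

section AuxLemmas

variable {V : Type*} (G : SimpleGraph V) (ord : ℕ → V)

lemma edist_comm' (a b : V) : G.edist a b = G.edist b a := SimpleGraph.edist_comm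

lemma Query_le {L : V → Set (V × ℕ∞)} {s t : V} {w : V} {d₁ d₂ : ℕ∞}
    (h1 : (w, d₁) ∈ L s) (h2 : (w, d₂) ∈ L t) : Query L s t ≤ d₁ + d₂ :=
  sInf_le ⟨w, d₁, d₂, h1, h2, rfl⟩

lemma prunedL_le_succ (k : ℕ) (u : V) : prunedL G ord k u ⊆ prunedL G ord (k + 1) u := by
  intro p hp
  simp only [prunedL]
  split
  · exact Set.mem_union_left _ hp
  · exact hp

lemma prunedL_mono {k k' : ℕ} (h : k ≤ k') (u : V) :
    prunedL G ord k u ⊆ prunedL G ord k' u := by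
  induction h with
  | refl => exact fun p hp => hp
  | step h ih => exact fun p hp => prunedL_le_succ G ord _ u (ih hp)

lemma mem_prunedL_iff (k : ℕ) (u : V) (w : V) (d : ℕ∞) :
    (w, d) ∈ prunedL G ord k u ↔
      ∃ m, 1 ≤ m ∧ m ≤ k ∧ w = ord m ∧ d = G.edist w u ∧
        G.edist (ord m) u < ⊤ ∧
        G.edist (ord m) u < Query (prunedL G ord (m - 1)) (ord m) u := by
  induction k with
  | zero =>
    simp only [prunedL, Set.mem_empty_iff_false, false_iff]
    rintro ⟨m, h1, h2, -⟩; omega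
  | succ k ih =>
    constructor
    · intro hp
      simp only [prunedL] at hp
      split at hp
      case isTrue h =>
        rcases hp with hp | hp
        · obtain ⟨m, hm1, hm2, hrest⟩ := ih.mp hp
          exact ⟨m, hm1, hm2.trans (Nat.le_succ k), hrest⟩
        · rw [Set.mem_singleton_iff, Prod.mk.injEq] at hp
          refine ⟨k + 1, by omega, le_rfl, hp.1, ?_, h.1, by simpa using h.2⟩
          rw [hp.1]; exact hp.2
      case isFalse h =>
        obtain ⟨m, hm1, hm2, hrest⟩ := ih.mp hp
        exact ⟨m, hm1, hm2.trans (Nat.le_succ k), hrest⟩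
    · rintro ⟨m, h1, h2, hw, hd, hfin, hq⟩
      rcases Nat.lt_or_ge m (k + 1) with hm | hm
      · exact prunedL_le_succ G ord k u (ih.mpr ⟨m, h1, by omega, hw, hd, hfin, hq⟩)
      · have hmk : m = k + 1 := by omega
        subst hmk
        subst hw; subst hd
        simp only [prunedL]
        rw [if_pos ⟨hfin, by simpa using hq⟩]
        exact Set.mem_union_right _ rfl

lemma edist_lt_query (i : ℕ) (x : V) (hfin : G.edist (ord i) x < ⊤)
    (h : ∀ i', 1 ≤ i' → i' < i → ord i' ∉ PG G (ord i) x) :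
    G.edist (ord i) x < Query (prunedL G ord (i - 1)) (ord i) x := by
  by_contra hq
  push_neg at hq
  have hne : G.edist (ord i) x ≠ ⊤ := hfin.ne
  have hlt : Query (prunedL G ord (i - 1)) (ord i) x < G.edist (ord i) x + 1 :=
    hq.trans_lt ((ENat.lt_add_one_iff hne).mpr le_rfl)
  obtain ⟨y, hy, hylt⟩ := sInf_lt_iff.mp hlt
  obtain ⟨w, d₁, d₂, h1, h2, rfl⟩ := hy
  have hyle : d₁ + d₂ ≤ G.edist (ord i) x := (ENat.lt_add_one_iff hne).mp hylt
  obtain ⟨m, hm1, hm2, hw1, hd1, -, -⟩ := (mem_prunedL_iff G ord _ _ _ _).mp h1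
  obtain ⟨m', hm1', hm2', hw2, hd2, -, -⟩ := (mem_prunedL_iff G ord _ _ _ _).mp h2
  have tri : G.edist (ord i) x ≤ G.edist (ord i) w + G.edist w x := G.edist_triangle
  have hsum : G.edist (ord i) w + G.edist w x ≤ G.edist (ord i) x := by
    rw [edist_comm' G (ord i) w, ← hd1, ← hd2]; exact hyle
  have heq : G.edist (ord i) w + G.edist w x = G.edist (ord i) x := le_antisymm hsum tri
  exact h m hm1 (by omega) (by rw [← hw1]; exact heq)

lemma query_le_of_exists (j : ℕ) (u : V) (hfin : G.edist (ord j) u < ⊤)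
    (hex : ∃ i, 1 ≤ i ∧ i < j ∧ ord i ∈ PG G (ord j) u) :
    Query (prunedL G ord (j - 1)) (ord j) u ≤ G.edist (ord j) u := by
  classical
  set i := Nat.find hex with hidef
  obtain ⟨hi1, hij, hiP⟩ := Nat.find_spec hex
  have hmin : ∀ m, m < i → ¬(1 ≤ m ∧ m < j ∧ ord m ∈ PG G (ord j) u) :=
    fun m hm => Nat.find_min hex hm
  have hiP' : G.edist (ord j) (ord i) + G.edist (ord i) u = G.edist (ord j) u := hiP
  have hfin1 : G.edist (ord i) (ord j) < ⊤ := by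
    rw [edist_comm' G]
    calc G.edist (ord j) (ord i) ≤ _ := le_self_add
    _ = G.edist (ord j) u := hiP'
    _ < ⊤ := hfin
  have hfin2 : G.edist (ord i) u < ⊤ := by
    calc G.edist (ord i) u ≤ _ := le_add_self
    _ = G.edist (ord j) u := hiP'
    _ < ⊤ := hfin
  -- no smaller-rank vertex lies on shortest paths between ord i and ord j
  have hns1 : ∀ i', 1 ≤ i' → i' < i → ord i' ∉ PG G (ord i) (ord j) := by
    intro i' h1 h2 hP'
    refine hmin i' h2 ⟨h1, by omega, ?_⟩
    have hP'' : G.edist (ord i) (ord i') + G.edist (ord i') (ord j) = G.edist (ord i) (ord j) := hP'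
    show G.edist (ord j) (ord i') + G.edist (ord i') u = G.edist (ord j) u
    refine le_antisymm ?_ G.edist_triangle
    calc G.edist (ord j) (ord i') + G.edist (ord i') u
        ≤ G.edist (ord j) (ord i') + (G.edist (ord i') (ord i) + G.edist (ord i) u) := by
          gcongr; exact G.edist_triangle
      _ = (G.edist (ord i) (ord i') + G.edist (ord i') (ord j)) + G.edist (ord i) u := by
          rw [edist_comm' G (ord j) (ord i'), edist_comm' G (ord i') (ord i)]; ring
      _ = G.edist (ord i) (ord j) + G.edist (ord i) u := by rw [hP'']
      _ = G.edist (ord j) u := by rw [edist_comm' G (ord i) (ord j)]; exact hiP'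
  have hns2 : ∀ i', 1 ≤ i' → i' < i → ord i' ∉ PG G (ord i) u := by
    intro i' h1 h2 hP'
    refine hmin i' h2 ⟨h1, by omega, ?_⟩
    have hP'' : G.edist (ord i) (ord i') + G.edist (ord i') u = G.edist (ord i) u := hP'
    show G.edist (ord j) (ord i') + G.edist (ord i') u = G.edist (ord j) u
    refine le_antisymm ?_ G.edist_triangle
    calc G.edist (ord j) (ord i') + G.edist (ord i') u
        ≤ (G.edist (ord j) (ord i) + G.edist (ord i) (ord i')) + G.edist (ord i') u := by
          gcongr; exact G.edist_triangle
      _ = G.edist (ord j) (ord i) + (G.edist (ord i) (ord i') + G.edist (ord i') u) := by ring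
      _ = G.edist (ord j) (ord i) + G.edist (ord i) u := by rw [hP'']
      _ = G.edist (ord j) u := hiP'
  have hq1 := edist_lt_query G ord i (ord j) hfin1 hns1
  have hq2 := edist_lt_query G ord i u hfin2 hns2
  have hmem1 : (ord i, G.edist (ord i) (ord j)) ∈ prunedL G ord (j - 1) (ord j) :=
    (mem_prunedL_iff G ord _ _ _ _).mpr ⟨i, hi1, by omega, rfl, rfl, hfin1, hq1⟩
  have hmem2 : (ord i, G.edist (ord i) u) ∈ prunedL G ord (j - 1) u :=
    (mem_prunedL_iff G ord _ _ _ _).mpr ⟨i, hi1, by omega, rfl, rfl, hfin2, hq2⟩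
  calc Query (prunedL G ord (j - 1)) (ord j) u ≤ G.edist (ord i) (ord j) + G.edist (ord i) u :=
        Query_le hmem1 hmem2
    _ = G.edist (ord j) u := by rw [edist_comm' G (ord i) (ord j)]; exact hiP'

end AuxLemmas

/-- Characterization of the pruned labels by ranks on shortest paths: for `1 ≤ j ≤ n`
and `u` with `d_G(v_j, u) < ∞`, the pair `(v_j, d_G(v_j, u))` belongs to `L'_n(u)` iff
no vertex `v_i` of smaller rank `i < j` lies on a shortest path between `v_j` and `u`. -/
theorem mem_prunedL_iff_min_rank {V : Type*} [Fintype V] (G : SimpleGraph V)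
    (n : ℕ) (ord : ℕ → V)
    (hinj : ∀ i ∈ Finset.Icc 1 n, ∀ j ∈ Finset.Icc 1 n, ord i = ord j → i = j)
    (hsurj : ∀ u : V, ∃ i ∈ Finset.Icc 1 n, ord i = u)
    (j : ℕ) (hj1 : 1 ≤ j) (hjn : j ≤ n) (u : V) (hfin : G.edist (ord j) u < ⊤) :
    (ord j, G.edist (ord j) u) ∈ prunedL G ord n u ↔
      ¬ ∃ i, 1 ≤ i ∧ i < j ∧ ord i ∈ PG G (ord j) u := by
  constructor
  · intro hmem hex
    have hle := query_le_of_exists G ord j u hfin hex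
    obtain ⟨m, hm1, hm2, hw, -, -, hq⟩ := (mem_prunedL_iff G ord n u _ _).mp hmem
    have hmj : m = j :=
      hinj m (Finset.mem_Icc.mpr ⟨hm1, hm2⟩) j (Finset.mem_Icc.mpr ⟨hj1, hjn⟩) hw.symm
    subst hmj
    exact absurd hq (not_lt.mpr hle)
  · intro h
    have hq := edist_lt_query G ord j u hfin (fun i' h1 h2 hP => h ⟨i', h1, h2, hP⟩)
    exact (mem_prunedL_iff G ord n u _ _).mpr ⟨j, hj1, hjn, rfl, rfl, hfin, hq⟩
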